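/- Let ζ₁,…,ζₙ be i.i.d. real random variables, S_i the random walk, σ = max{i ≤ n : S_i ≤ 0}. Define N⁺ = Σ_{i=1}^σ 1{S_i ≥ 0} and →G = max{i ≤ σ : S_i = max_{0≤j≤σ} S_j}. Then N⁺ and →G have the same distribution. -/

import Mathlib

/-!
Condition on `σ = k`. The event `{σ = k}` only involves the partial sums `S_i` with `i ≥ k`, which
do not change when the first `k` increments are permuted; so, given `σ = k`, these increments are
exchangeable, and it suffices to show that `N⁺` and `→G` of the walk with `k` fixed increments taken
in a uniformly random order have the same distribution (Sparre Andersen's combinatorial lemma).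
This goes by induction on `k`, through the last increment: if the total sum is negative, the last
step contributes to neither statistic; if it is nonnegative, it adds one to `N⁺`, and moving the
last increment to the front adds one to `→G`.
-/

open MeasureTheory ProbabilityTheory Finset
open scoped ENNReal

lemma Fin.init_cons {α : Type*} {k : ℕ} (c : α) (y : Fin (k + 1) → α) :
    Fin.init (Fin.cons c y : Fin (k + 2) → α) = Fin.cons c (Fin.init y) := by
  ext i
  refine Fin.cases ?_ (fun j => ?_) i <;> simp [Fin.init]

lemma Fin.init_comp_finRotate {α : Type*} {k : ℕ} (v : Fin (k + 1) → α) :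
    Fin.init (v ∘ finRotate (k + 1)) = Fin.tail v := by
  ext j
  simp [Fin.init, Fin.tail, Fin.coeSucc_eq_succ]

lemma Fintype.sum_equiv_fin_succ_comp_init {α M ι : Type*} [AddCommMonoid M] [Fintype ι]
    [DecidableEq ι] {k : ℕ} (x : ι → α) (f : (Fin k → α) → M) :
    ∑ e : Fin (k + 1) ≃ ι, f (Fin.init (x ∘ e)) =
      ∑ a : ι, ∑ e : Fin k ≃ {b // b ≠ a}, f ((x ∘ (↑)) ∘ e) := by
  rw [← Fintype.sum_fiberwise fun e : Fin (k + 1) ≃ ι => e (Fin.last k)]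
  refine Fintype.sum_congr _ _ fun a => Fintype.sum_equiv
    (((Equiv.equivCongr finSuccEquivLast (Equiv.refl ι)).subtypeEquiv fun e => ?_).trans
      (Equiv.optionSubtype a)) _ _ fun e => ?_
  · exact Iff.rfl
  · congr 1
    ext j
    simp [Fin.init, Equiv.subtypeEquiv, Equiv.equivCongr]

theorem MeasureTheory.measure_preimage_eq_of_card_eq {Ω E ι : Type*} [MeasurableSpace Ω]
    [MeasurableSpace E] [Fintype ι] {μ : Measure Ω} {X : ι → Ω → E} (hX : ∀ i, Measurable (X i))
    (hlaw : ∀ i j, μ.map (X i) = μ.map (X j)) {A B : Set E} (hA : MeasurableSet A)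
    (hB : MeasurableSet B) (hcard : ∀ ω, Nat.card {i // X i ω ∈ A} = Nat.card {i // X i ω ∈ B})
    (i : ι) : μ (X i ⁻¹' A) = μ (X i ⁻¹' B) := by
  classical
  have key {C : Set E} (hC : MeasurableSet C) :
      Fintype.card ι * μ (X i ⁻¹' C) = ∫⁻ ω, (Nat.card {i // X i ω ∈ C} : ℝ≥0∞) ∂μ := by
    calc Fintype.card ι * μ (X i ⁻¹' C) = ∑ j, μ (X j ⁻¹' C) := by
          rw [← nsmul_eq_mul, ← Finset.card_univ, ← Finset.sum_const]
          refine Finset.sum_congr rfl fun j _ => ?_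
          rw [← Measure.map_apply (hX i) hC, ← Measure.map_apply (hX j) hC, hlaw]
      _ = ∫⁻ ω, ∑ j, (X j ⁻¹' C).indicator 1 ω ∂μ := by
          rw [lintegral_finsetSum _ fun j _ => measurable_one.indicator (hX j hC)]
          simp only [lintegral_indicator_one (hX _ hC)]
      _ = ∫⁻ ω, (Nat.card {i // X i ω ∈ C} : ℝ≥0∞) ∂μ := by
          refine lintegral_congr fun ω => ?_
          simp [Set.indicator_apply, Nat.card_eq_fintype_card, Fintype.card_subtype]
  have : Nonempty ι := ⟨i⟩
  refine (ENNReal.mul_right_inj (Nat.cast_ne_zero.2 (Fintype.card_ne_zero (α := ι)))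
    (ENNReal.natCast_ne_top _)).1 ?_
  rw [key hA, key hB]
  simp only [hcard]

lemma ProbabilityTheory.iIndepFun.map_fun_precomp_eq {Ω E ι : Type*} [MeasurableSpace Ω]
    [MeasurableSpace E] {μ : Measure Ω} {ζ : ι → Ω → E} (hindep : iIndepFun ζ μ)
    (hmeas : ∀ i, Measurable (ζ i)) (hident : ∀ i j, μ.map (ζ i) = μ.map (ζ j)) {g : ι → ι}
    (hg : Function.Injective g) :
    μ.map (fun ω j => ζ (g j) ω) = μ.map (fun ω j => ζ j ω) := by
  rw [(hindep.precomp hg).map_fun_eq_infinitePi_map fun j => hmeas (g j),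
    hindep.map_fun_eq_infinitePi_map hmeas]
  exact congrArg Measure.infinitePi (funext fun j => hident (g j) j)

namespace RandomWalk

noncomputable section

/- For increments `x : Fin k → ℝ`, with partial sums `s_i = x₀ + ⋯ + x_{i-1}` (`0 ≤ i ≤ k`, so that
`s_k = ∑ i, x i`), these are `max_i s_i`, `#{1 ≤ i ≤ k | 0 ≤ s_i}` and the last `i` at which the
maximum is attained. -/

def maxPartialSum : {k : ℕ} → (Fin k → ℝ) → ℝ
  | 0, _ => 0
  | _ + 1, x => max (maxPartialSum (Fin.init x)) (∑ i, x i)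

def numNonnegPartialSums : {k : ℕ} → (Fin k → ℝ) → ℕ
  | 0, _ => 0
  | _ + 1, x => numNonnegPartialSums (Fin.init x) + if 0 ≤ ∑ i, x i then 1 else 0

def lastArgmax : {k : ℕ} → (Fin k → ℝ) → ℕ
  | 0, _ => 0
  | k + 1, x => if maxPartialSum (Fin.init x) ≤ ∑ i, x i then k + 1 else lastArgmax (Fin.init x)

lemma maxPartialSum_succ {k : ℕ} (x : Fin (k + 1) → ℝ) :
    maxPartialSum x = max (maxPartialSum (Fin.init x)) (∑ i, x i) := rfl

lemma numNonnegPartialSums_succ {k : ℕ} (x : Fin (k + 1) → ℝ) :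
    numNonnegPartialSums x = numNonnegPartialSums (Fin.init x) + if 0 ≤ ∑ i, x i then 1 else 0 :=
  rfl

lemma lastArgmax_succ {k : ℕ} (x : Fin (k + 1) → ℝ) :
    lastArgmax x =
      if maxPartialSum (Fin.init x) ≤ ∑ i, x i then k + 1 else lastArgmax (Fin.init x) := rfl

lemma maxPartialSum_nonneg : ∀ {k} (x : Fin k → ℝ), 0 ≤ maxPartialSum x
  | 0, _ => le_rfl
  | _ + 1, x => le_max_of_le_left (maxPartialSum_nonneg (Fin.init x))

lemma sum_le_maxPartialSum : ∀ {k} (x : Fin k → ℝ), ∑ i, x i ≤ maxPartialSum x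
  | 0, _ => by simp [maxPartialSum]
  | _ + 1, _ => le_max_right _ _

lemma maxPartialSum_cons (c : ℝ) : ∀ {k} (y : Fin k → ℝ),
    maxPartialSum (Fin.cons c y : Fin (k + 1) → ℝ) = max 0 (c + maxPartialSum y)
  | 0, _ => by simp [maxPartialSum, max_comm]
  | _ + 1, y => by
    rw [maxPartialSum_succ, Fin.init_cons, maxPartialSum_cons c (Fin.init y), Fin.sum_cons,
      maxPartialSum_succ y, ← max_add_add_left, max_assoc]

lemma lastArgmax_cons {c : ℝ} : ∀ {k} {y : Fin k → ℝ}, 0 ≤ c + maxPartialSum y →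
    lastArgmax (Fin.cons c y : Fin (k + 1) → ℝ) = lastArgmax y + 1
  | 0, _, h => by simpa [lastArgmax, maxPartialSum] using h
  | k + 1, y, h => by
    rw [lastArgmax_succ, Fin.init_cons, maxPartialSum_cons, Fin.sum_cons, lastArgmax_succ y]
    rw [maxPartialSum_succ] at h
    by_cases hy : maxPartialSum (Fin.init y) ≤ ∑ i, y i
    · rw [max_eq_right hy] at h
      rw [if_pos (max_le h (by linarith)), if_pos hy]
    · rw [max_eq_left (le_of_not_ge hy)] at h
      rw [if_neg (fun h' => hy (by linarith [le_max_right 0 (c + maxPartialSum (Fin.init y))])),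
        if_neg hy, lastArgmax_cons h]

theorem sum_numNonnegPartialSums_comp_equiv {M ι : Type*} [AddCommMonoid M] [Fintype ι]
    [DecidableEq ι] (k : ℕ) (x : ι → ℝ) (g : ℕ → M) :
    ∑ e : Fin k ≃ ι, g (numNonnegPartialSums (x ∘ e)) =
      ∑ e : Fin k ≃ ι, g (lastArgmax (x ∘ e)) := by
  induction k generalizing ι g with
  | zero => rfl
  | succ k ih =>
    have hsum (e : Fin (k + 1) ≃ ι) : ∑ i, (x ∘ e) i = ∑ a, x a := e.sum_comp x
    have hinit (g : ℕ → M) : ∑ e : Fin (k + 1) ≃ ι, g (numNonnegPartialSums (Fin.init (x ∘ e))) =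
        ∑ e : Fin (k + 1) ≃ ι, g (lastArgmax (Fin.init (x ∘ e))) := by
      rw [Fintype.sum_equiv_fin_succ_comp_init x fun v => g (numNonnegPartialSums v),
        Fintype.sum_equiv_fin_succ_comp_init x fun v => g (lastArgmax v)]
      exact Fintype.sum_congr _ _ fun a => ih _ g
    rcases le_or_gt 0 (∑ a, x a) with hs | hs
    · have hrot (e : Fin (k + 1) ≃ ι) :
          lastArgmax (x ∘ e) = lastArgmax (Fin.init ((x ∘ e) ∘ finRotate (k + 1))) + 1 := by
        rw [Fin.init_comp_finRotate, ← lastArgmax_cons, Fin.cons_self_tail]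
        have := sum_le_maxPartialSum (Fin.tail (x ∘ e))
        have h := hsum e
        rw [Fin.sum_univ_succ] at h
        simp only [Fin.tail] at this ⊢
        linarith
      calc ∑ e : Fin (k + 1) ≃ ι, g (numNonnegPartialSums (x ∘ e))
          = ∑ e : Fin (k + 1) ≃ ι, g (numNonnegPartialSums (Fin.init (x ∘ e)) + 1) := by
            simp only [numNonnegPartialSums_succ, hsum, if_pos hs]
        _ = ∑ e : Fin (k + 1) ≃ ι, g (lastArgmax (Fin.init (x ∘ e)) + 1) := hinit (g ∘ (· + 1))
        _ = ∑ e : Fin (k + 1) ≃ ι, g (lastArgmax (x ∘ e)) := by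
            simp only [hrot]
            exact (Equiv.sum_comp (Equiv.equivCongr (finRotate (k + 1)).symm (Equiv.refl ι))
              fun e => g (lastArgmax (Fin.init (x ∘ e)) + 1)).symm
    · have hmax (e : Fin (k + 1) ≃ ι) : ¬ maxPartialSum (Fin.init (x ∘ e)) ≤ ∑ a, x a :=
        fun h => (maxPartialSum_nonneg _).not_gt (h.trans_lt hs)
      simp only [numNonnegPartialSums_succ, lastArgmax_succ, hsum, if_neg hs.not_ge, add_zero,
        hmax, if_false]
      exact hinit g

theorem card_numNonnegPartialSums_comp_perm_eq (k : ℕ) (x : Fin k → ℝ) (m : ℕ) :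
    Nat.card {π : Equiv.Perm (Fin k) // numNonnegPartialSums (x ∘ π) = m} =
      Nat.card {π : Equiv.Perm (Fin k) // lastArgmax (x ∘ π) = m} := by
  change Nat.card {π : Fin k ≃ Fin k // _} = Nat.card {π : Fin k ≃ Fin k // _}
  rw [Nat.card_eq_fintype_card, Nat.card_eq_fintype_card, Fintype.card_subtype,
    Fintype.card_subtype, card_filter, card_filter]
  exact sum_numNonnegPartialSums_comp_equiv k x fun i => if i = m then 1 else 0

lemma isGreatest_maxPartialSum (y : ℕ → ℝ) : ∀ k,
    IsGreatest ((fun i => ∑ j ∈ range i, y j) '' Set.Iic k) (maxPartialSum fun j : Fin k => y j)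
  | 0 => ⟨⟨0, Set.mem_Iic.2 le_rfl, rfl⟩, by
      rintro _ ⟨i, hi, rfl⟩
      simp [Nat.le_zero.1 hi, maxPartialSum]⟩
  | k + 1 => by
    rw [← Order.succ_eq_add_one, Order.Iic_succ, Set.image_insert_eq, Order.succ_eq_add_one,
      maxPartialSum_succ, max_comm, Fin.sum_univ_eq_sum_range (fun j => y j)]
    exact (isGreatest_maxPartialSum y k).insert _

lemma isGreatest_lastArgmax (y : ℕ → ℝ) : ∀ k,
    IsGreatest {i | i ≤ k ∧ ∑ j ∈ range i, y j = maxPartialSum fun j : Fin k => y j}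
      (lastArgmax fun j : Fin k => y j)
  | 0 => ⟨⟨le_rfl, sum_range_zero _⟩, fun _ hi => hi.1⟩
  | k + 1 => by
    have ih := isGreatest_lastArgmax y k
    rw [lastArgmax_succ, maxPartialSum_succ, Fin.sum_univ_eq_sum_range (fun j => y j)]
    split_ifs with h
    · rw [max_eq_right h]
      exact ⟨⟨le_rfl, rfl⟩, fun _ hi => hi.1⟩
    · rw [max_eq_left (le_of_not_ge h)]
      refine ⟨⟨ih.1.1.trans k.le_succ, ih.1.2⟩, fun i ⟨hik, hi⟩ => ih.2 ⟨?_, hi⟩⟩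
      rcases Nat.of_le_succ hik with hik | rfl
      · exact hik
      · exact absurd (hi ▸ le_refl _) h

lemma numNonnegPartialSums_eq_sum_Icc (y : ℕ → ℝ) : ∀ k,
    (numNonnegPartialSums fun j : Fin k => y j) =
      ∑ i ∈ Icc 1 k, if 0 ≤ ∑ j ∈ range i, y j then 1 else 0
  | 0 => rfl
  | k + 1 => by
    rw [numNonnegPartialSums_succ, sum_Icc_succ_top (by omega),
      Fin.sum_univ_eq_sum_range (fun j => y j), ← numNonnegPartialSums_eq_sum_Icc y k]
    rfl

lemma lastArgmax_eq_sSup (y : ℕ → ℝ) (k : ℕ) :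
    (lastArgmax fun j : Fin k => y j) = sSup {i | i ≤ k ∧
      ∑ j ∈ range i, y j = sSup ((fun i => ∑ j ∈ range i, y j) '' Set.Iic k)} := by
  rw [(isGreatest_maxPartialSum y k).csSup_eq, (isGreatest_lastArgmax y k).csSup_eq]

def lastNonpos (n : ℕ) (y : ℕ → ℝ) : ℕ := sSup {i | i ≤ n ∧ ∑ j ∈ range i, y j ≤ 0}

lemma lastNonpos_eq_iff {n k : ℕ} {y : ℕ → ℝ} : lastNonpos n y = k ↔
    k ≤ n ∧ ∑ j ∈ range k, y j ≤ 0 ∧ ∀ i, k < i → i ≤ n → 0 < ∑ j ∈ range i, y j := by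
  have hbdd : BddAbove {i | i ≤ n ∧ ∑ j ∈ range i, y j ≤ 0} := ⟨n, fun _ hi => hi.1⟩
  constructor
  · rintro rfl
    have hmem : lastNonpos n y ∈ {i | i ≤ n ∧ ∑ j ∈ range i, y j ≤ 0} :=
      Nat.sSup_mem ⟨0, Nat.zero_le n, by simp⟩ hbdd
    refine ⟨hmem.1, hmem.2, fun i hi hin => lt_of_not_ge fun h => ?_⟩
    exact hi.not_ge (le_csSup hbdd ⟨hin, h⟩)
  · rintro ⟨hkn, hk, hpos⟩
    exact IsGreatest.csSup_eq ⟨⟨hkn, hk⟩, fun i ⟨hin, hi⟩ =>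
      le_of_not_gt fun hki => (hpos i hki hin).not_ge hi⟩

lemma measurableSet_lastNonpos_eq (n k : ℕ) : MeasurableSet {y : ℕ → ℝ | lastNonpos n y = k} := by
  simp only [lastNonpos_eq_iff]
  measurability

lemma measurable_maxPartialSum : ∀ k, Measurable (maxPartialSum : (Fin k → ℝ) → ℝ)
  | 0 => measurable_const
  | k + 1 => (measurable_maxPartialSum k).comp (by fun_prop) |>.max (by fun_prop)

lemma measurable_numNonnegPartialSums : ∀ k, Measurable (numNonnegPartialSums : (Fin k → ℝ) → ℕ)
  | 0 => measurable_const
  | k + 1 => ((measurable_numNonnegPartialSums k).comp (by fun_prop)).add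
      (Measurable.ite (measurableSet_le measurable_const (by fun_prop)) measurable_const
        measurable_const)

lemma measurable_lastArgmax : ∀ k, Measurable (lastArgmax : (Fin k → ℝ) → ℕ)
  | 0 => measurable_const
  | k + 1 => Measurable.ite
      (measurableSet_le ((measurable_maxPartialSum k).comp (by fun_prop)) (by fun_prop))
      measurable_const ((measurable_lastArgmax k).comp (by fun_prop))

lemma restrict_comp_extendDomain {k : ℕ} (y : ℕ → ℝ) (π : Equiv.Perm (Fin k)) :
    (fun j : Fin k => (y ∘ π.extendDomain Fin.equivSubtype) j) = (fun j : Fin k => y j) ∘ π := by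
  ext j
  rw [Function.comp_apply, Equiv.Perm.extendDomain_apply_subtype π Fin.equivSubtype (b := j) j.isLt]
  rfl

lemma sum_range_comp_extendDomain {k i : ℕ} (hki : k ≤ i) (y : ℕ → ℝ) (π : Equiv.Perm (Fin k)) :
    ∑ j ∈ range i, (y ∘ π.extendDomain Fin.equivSubtype) j = ∑ j ∈ range i, y j := by
  refine Equiv.Perm.sum_comp _ _ _ fun j hj => mem_range.2 ?_
  by_contra hij
  exact hj (Equiv.Perm.extendDomain_apply_not_subtype _ _ (by simp; omega))

lemma lastNonpos_comp_extendDomain_eq_iff {n k : ℕ} (y : ℕ → ℝ) (π : Equiv.Perm (Fin k)) :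
    lastNonpos n (y ∘ π.extendDomain Fin.equivSubtype) = k ↔ lastNonpos n y = k := by
  have h {i} (hki : k ≤ i) := sum_range_comp_extendDomain hki y π
  simp +contextual only [lastNonpos_eq_iff, h le_rfl, fun i (hi : k < i) => h hi.le]

def lastNonposWith (F : (k : ℕ) → (Fin k → ℝ) → ℕ) (n : ℕ) (y : ℕ → ℝ) : ℕ × ℕ :=
  (lastNonpos n y, F _ fun j : Fin (lastNonpos n y) => y j)

lemma lastNonposWith_eq_iff {F : (k : ℕ) → (Fin k → ℝ) → ℕ} {n k m : ℕ} {y : ℕ → ℝ} :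
    lastNonposWith F n y = (k, m) ↔ lastNonpos n y = k ∧ F k (fun j : Fin k => y j) = m := by
  simp only [lastNonposWith, Prod.mk.injEq]
  constructor <;> rintro ⟨rfl, rfl⟩ <;> exact ⟨rfl, rfl⟩

lemma measurable_lastNonposWith {F : (k : ℕ) → (Fin k → ℝ) → ℕ} (hF : ∀ k, Measurable (F k))
    (n : ℕ) : Measurable (lastNonposWith F n) := by
  refine measurable_to_countable' fun ⟨k, m⟩ => ?_
  have : lastNonposWith F n ⁻¹' {(k, m)} =
      {y | lastNonpos n y = k} ∩ (fun y j => y j : (ℕ → ℝ) → Fin k → ℝ) ⁻¹' (F k ⁻¹' {m}) := by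
    ext y
    exact lastNonposWith_eq_iff
  rw [this]
  exact (measurableSet_lastNonpos_eq n k).inter
    ((hF k).comp (by fun_prop) (measurableSet_singleton m))

theorem map_lastNonposWith_eq {Ω : Type*} [MeasurableSpace Ω] {μ : Measure Ω} {ζ : ℕ → Ω → ℝ}
    (hmeas : ∀ i, Measurable (ζ i)) (hindep : iIndepFun ζ μ)
    (hident : ∀ i j, μ.map (ζ i) = μ.map (ζ j)) {F₁ F₂ : (k : ℕ) → (Fin k → ℝ) → ℕ}
    (hF₁ : ∀ k, Measurable (F₁ k)) (hF₂ : ∀ k, Measurable (F₂ k))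
    (hF : ∀ k (x : Fin k → ℝ) m, Nat.card {π : Equiv.Perm (Fin k) // F₁ k (x ∘ π) = m} =
      Nat.card {π : Equiv.Perm (Fin k) // F₂ k (x ∘ π) = m}) (n : ℕ) :
    μ.map (fun ω => lastNonposWith F₁ n fun j => ζ j ω) =
      μ.map (fun ω => lastNonposWith F₂ n fun j => ζ j ω) := by
  have hX : Measurable fun ω j => ζ j ω := measurable_pi_lambda _ hmeas
  refine Measure.ext_of_singleton fun ⟨k, m⟩ => ?_
  rw [Measure.map_apply (f := fun ω => lastNonposWith F₁ n fun j => ζ j ω)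
      ((measurable_lastNonposWith hF₁ n).comp hX) (measurableSet_singleton _),
    Measure.map_apply (f := fun ω => lastNonposWith F₂ n fun j => ζ j ω)
      ((measurable_lastNonposWith hF₂ n).comp hX) (measurableSet_singleton _)]
  let X (π : Equiv.Perm (Fin k)) (ω : Ω) (j : ℕ) : ℝ := ζ (π.extendDomain Fin.equivSubtype j) ω
  have hlaw (π π' : Equiv.Perm (Fin k)) : μ.map (X π) = μ.map (X π') := by
    rw [hindep.map_fun_precomp_eq hmeas hident (Equiv.injective _),
      hindep.map_fun_precomp_eq hmeas hident (Equiv.injective _)]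
  have hmem {F : (k : ℕ) → (Fin k → ℝ) → ℕ} (π : Equiv.Perm (Fin k)) (ω : Ω) :
      X π ω ∈ lastNonposWith F n ⁻¹' {(k, m)} ↔
        lastNonpos n (fun j => ζ j ω) = k ∧ F k ((fun j : Fin k => ζ j ω) ∘ π) = m := by
    rw [Set.mem_preimage, Set.mem_singleton_iff, lastNonposWith_eq_iff,
      ← restrict_comp_extendDomain (fun j => ζ j ω) π,
      ← lastNonpos_comp_extendDomain_eq_iff (fun j => ζ j ω) π]
    rfl
  have hcard (ω : Ω) : Nat.card {π // X π ω ∈ lastNonposWith F₁ n ⁻¹' {(k, m)}} =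
      Nat.card {π // X π ω ∈ lastNonposWith F₂ n ⁻¹' {(k, m)}} := by
    simp only [hmem]
    by_cases h : lastNonpos n (fun j => ζ j ω) = k
    · simp only [h, true_and]
      exact hF k _ m
    · simp only [h, false_and]
  have key := measure_preimage_eq_of_card_eq (fun π => measurable_pi_lambda _ fun _ => hmeas _)
    hlaw (measurable_lastNonposWith hF₁ n (measurableSet_singleton _))
    (measurable_lastNonposWith hF₂ n (measurableSet_singleton _)) hcard 1
  simp only [Equiv.Perm.extendDomain_one, Equiv.Perm.coe_one, id_eq] at key
  exact key

end

end RandomWalk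

open RandomWalk in
theorem stmt_8_general {Ω : Type*} [MeasurableSpace Ω] (μ : Measure Ω)
    (n : ℕ) (ζ : ℕ → Ω → ℝ)
    (hmeas : ∀ i, Measurable (ζ i))
    (hindep : ProbabilityTheory.iIndepFun ζ μ)
    (hident : ∀ i, μ.map (ζ i) = μ.map (ζ 0))
    (S : ℕ → Ω → ℝ) (hS : ∀ i ω, S i ω = ∑ j ∈ Finset.range i, ζ j ω)
    (σ : Ω → ℕ) (hσ : ∀ ω, σ ω = sSup {i | i ≤ n ∧ S i ω ≤ 0})
    (Nplus G : Ω → ℕ)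
    (hNplus : ∀ ω, Nplus ω = ∑ i ∈ Finset.Icc 1 (σ ω), if 0 ≤ S i ω then 1 else 0)
    (hG : ∀ ω, G ω = sSup {i | i ≤ σ ω ∧ S i ω = sSup ((fun j => S j ω) '' Set.Iic (σ ω))}) :
    μ.map Nplus = μ.map G := by
  have hX : Measurable fun ω j => ζ j ω := measurable_pi_lambda _ hmeas
  have hmeasN :
      Measurable fun ω => lastNonposWith (fun _ => numNonnegPartialSums) n fun j => ζ j ω :=
    (measurable_lastNonposWith measurable_numNonnegPartialSums n).comp hX
  have hmeasG : Measurable fun ω => lastNonposWith (fun _ => lastArgmax) n fun j => ζ j ω :=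
    (measurable_lastNonposWith measurable_lastArgmax n).comp hX
  have hσ' (ω : Ω) : σ ω = lastNonpos n fun j => ζ j ω := by simp only [hσ, hS, lastNonpos]
  have hlawN : μ.map Nplus = (μ.map fun ω =>
      lastNonposWith (fun _ => numNonnegPartialSums) n fun j => ζ j ω).map Prod.snd := by
    rw [Measure.map_map measurable_snd hmeasN]
    congr with ω
    simp only [Function.comp_apply, lastNonposWith, hNplus, hS, hσ']
    exact (numNonnegPartialSums_eq_sum_Icc (fun j => ζ j ω) _).symm
  have hlawG : μ.map G = (μ.map fun ω =>
      lastNonposWith (fun _ => lastArgmax) n fun j => ζ j ω).map Prod.snd := by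
    rw [Measure.map_map measurable_snd hmeasG]
    congr with ω
    simp only [Function.comp_apply, lastNonposWith, hG, hS, hσ']
    exact (lastArgmax_eq_sSup (fun j => ζ j ω) _).symm
  rw [hlawN, hlawG, map_lastNonposWith_eq hmeas hindep (fun i j => by rw [hident i, hident j])
    measurable_numNonnegPartialSums measurable_lastArgmax card_numNonnegPartialSums_comp_perm_eq]

/-- N⁺ = Σ_{i=1}^σ 1{S_i ≥ 0} and →G = max{i ≤ σ : S_i = max_{j ≤ σ} S_j} have the
same distribution. -/
theorem stmt_8 {Ω : Type*} [MeasurableSpace Ω] (μ : Measure Ω) [IsProbabilityMeasure μ]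
    (n : ℕ) (ζ : ℕ → Ω → ℝ)
    (hmeas : ∀ i, Measurable (ζ i))
    (hindep : ProbabilityTheory.iIndepFun ζ μ)
    (hident : ∀ i, μ.map (ζ i) = μ.map (ζ 0))
    (S : ℕ → Ω → ℝ) (hS : ∀ i ω, S i ω = ∑ j ∈ Finset.range i, ζ j ω)
    (σ : Ω → ℕ) (hσ : ∀ ω, σ ω = sSup {i | i ≤ n ∧ S i ω ≤ 0})
    (Nplus G : Ω → ℕ)
    (hNplus : ∀ ω, Nplus ω = ∑ i ∈ Finset.Icc 1 (σ ω), if 0 ≤ S i ω then 1 else 0)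
    (hG : ∀ ω, G ω = sSup {i | i ≤ σ ω ∧ S i ω = sSup ((fun j => S j ω) '' Set.Iic (σ ω))}) :
    μ.map Nplus = μ.map G :=
  stmt_8_general μ n ζ hmeas hindep hident S hS σ hσ Nplus G hNplus hG
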